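/- Let Ω ⊂ ℝ² be a closed rectangular box with positive volume, let u : ℝ² → ℝ² be continuously differentiable on a neighborhood of Ω with div u = 0 on Ω and u = 0 on ∂Ω, let ε > 0, π₁ > 0, let D : ℝ² → ℝ be continuously differentiable with D ≥ 1 on Ω, let Ω₁,…,Ω_m be a measurable partition of Ω with SUPG weights δ_e ≥ 0, mesh sizes h_e > 0 and inverse constant C_inv > 0 satisfying δ_e ≤ 1/(2ε) and δ_e ≤ h_e²/(2 π₁ C_inv² (sup_{Ω_e} D)²), and let c_Ω > 0. Then there exists a constant C ≥ 0, depending only on c_Ω, ε, π₁, sup_Ω D, sup_Ω |u| and the weights δ_e, such that for all φ, ψ twice continuously differentiable on a neighborhood of Ω that satisfy the Poincaré inequality ∫_Ω f² dx ≤ c_Ω ∫_Ω |∇f|² dx (for f = φ and f = ψ) and the elementwise inverse-type estimate ‖∇·(D∇f)‖_{L²(Ω_e)} ≤ (C_inv (sup_{Ω_e} D)/h_e) ‖∇f‖_{L²(Ω_e)} for every e, the SUPG bilinear form is continuous: a^ε_supg(φ,ψ) ≤ C (∫_Ω |∇φ|² dx)^{1/2} (∫_Ω |∇ψ|² dx)^{1/2}.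 -/

import Mathlib

/-!
Every term of the SUPG form is an `L²` pairing, on `Ω` or on one element `Ωₑ`, so Cauchy–Schwarz
bounds it by a product of two `L²` norms. Each of these is in turn at most a constant times
`‖∇φ‖_{L²(Ω)}` or `‖∇ψ‖_{L²(Ω)}`: `u · ∇φ` through the maximum of `|u|` on the compact box,
`φ` itself through the Poincaré inequality, and the second-order residual `∇·(D∇φ)` on `Ωₑ`
through the inverse estimate. Continuity on the compact box makes all the integrals finite.
-/

open MeasureTheory

/-- Pointwise divergence of a vector field on `ℝ² = EuclideanSpace ℝ (Fin 2)`. -/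
noncomputable def vdiv (w : EuclideanSpace ℝ (Fin 2) → EuclideanSpace ℝ (Fin 2))
    (x : EuclideanSpace ℝ (Fin 2)) : ℝ :=
  ∑ i, fderiv ℝ w x (EuclideanSpace.single i 1) i

theorem abs_integral_mul_le_sqrt_mul_sqrt {α : Type*} [MeasurableSpace α] {μ : Measure α}
    {f g : α → ℝ} (hf : MemLp f 2 μ) (hg : MemLp g 2 μ) :
    |∫ x, f x * g x ∂μ| ≤ √(∫ x, f x ^ 2 ∂μ) * √(∫ x, g x ^ 2 ∂μ) := by
  have hsq : ∀ y : ℝ, ‖y‖ ^ (2 : ℝ) = y ^ 2 := fun y => by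
    rw [Real.rpow_two, Real.norm_eq_abs, sq_abs]
  have holder := integral_mul_norm_le_Lp_mul_Lq Real.HolderConjugate.two_two
    (by simpa using hf) (by simpa using hg)
  simp only [hsq, ← Real.sqrt_eq_rpow] at holder
  calc |∫ x, f x * g x ∂μ| ≤ ∫ x, ‖f x * g x‖ ∂μ := abs_integral_le_integral_abs
    _ = ∫ x, ‖f x‖ * ‖g x‖ ∂μ := by simp_rw [norm_mul]
    _ ≤ _ := holder

theorem IsCompact.exists_nonneg_bound_of_continuousOn {X F : Type*} [TopologicalSpace X]
    [SeminormedAddCommGroup F] {s : Set X} {f : X → F} (hs : IsCompact s)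
    (hf : ContinuousOn f s) : ∃ C, 0 ≤ C ∧ ∀ x ∈ s, ‖f x‖ ≤ C := by
  obtain ⟨C, hC⟩ := hs.exists_bound_of_continuousOn hf
  exact ⟨max C 0, le_max_right _ _, fun x hx => (hC x hx).trans (le_max_left _ _)⟩

section ContinuousOnCompact

variable {X : Type*} [TopologicalSpace X] [T2Space X] [MeasurableSpace X] [OpensMeasurableSpace X]
  {μ : Measure X} [IsFiniteMeasureOnCompacts μ] {K s : Set X}

theorem ContinuousOn.memLp_two_restrict {f : X → ℝ} (hK : IsCompact K) (hs : s ⊆ K)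
    (hf : ContinuousOn f K) : MemLp f 2 (μ.restrict s) :=
  ((memLp_two_iff_integrable_sq (hf.aestronglyMeasurable hK.measurableSet)).2
    ((hf.pow 2).integrableOn_compact hK)).mono_measure (Measure.restrict_mono hs le_rfl)

theorem abs_setIntegral_mul_le_of_sqrt_le {f g : X → ℝ} {A B : ℝ} (hK : IsCompact K)
    (hs : s ⊆ K) (hf : ContinuousOn f K) (hg : ContinuousOn g K)
    (hA : √(∫ x in s, f x ^ 2 ∂μ) ≤ A) (hB : √(∫ x in s, g x ^ 2 ∂μ) ≤ B) :
    |∫ x in s, f x * g x ∂μ| ≤ A * B :=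
  (abs_integral_mul_le_sqrt_mul_sqrt (hf.memLp_two_restrict hK hs)
    (hg.memLp_two_restrict hK hs)).trans
    (mul_le_mul hA hB (Real.sqrt_nonneg _) ((Real.sqrt_nonneg _).trans hA))

theorem sqrt_setIntegral_sq_mono {f : X → ℝ} (hK : IsCompact K) (hs : s ⊆ K)
    (hf : ContinuousOn f K) : √(∫ x in s, f x ^ 2 ∂μ) ≤ √(∫ x in K, f x ^ 2 ∂μ) :=
  Real.sqrt_le_sqrt <| setIntegral_mono_set ((hf.pow 2).integrableOn_compact hK)
    (Filter.Eventually.of_forall fun _ => sq_nonneg _) hs.eventuallyLE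

theorem sqrt_setIntegral_sq_le_mul_of_abs_le {f p : X → ℝ} {M : ℝ} (hK : IsCompact K)
    (hf : ContinuousOn f K) (hp : ContinuousOn p K) (hM : 0 ≤ M)
    (hfp : ∀ x ∈ K, |f x| ≤ M * p x) :
    √(∫ x in K, f x ^ 2 ∂μ) ≤ M * √(∫ x in K, p x ^ 2 ∂μ) := by
  have hle : ∫ x in K, f x ^ 2 ∂μ ≤ ∫ x in K, M ^ 2 * p x ^ 2 ∂μ :=
    setIntegral_mono_on ((hf.pow 2).integrableOn_compact hK)
      (((hp.pow 2).integrableOn_compact hK).const_mul _) hK.measurableSet fun x hx => by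
        nlinarith [hfp x hx, abs_nonneg (f x), sq_abs (f x)]
  calc √(∫ x in K, f x ^ 2 ∂μ) ≤ √(∫ x in K, M ^ 2 * p x ^ 2 ∂μ) := Real.sqrt_le_sqrt hle
    _ = M * √(∫ x in K, p x ^ 2 ∂μ) := by
      rw [integral_const_mul, Real.sqrt_mul (sq_nonneg M), Real.sqrt_sq hM]

theorem setIntegral_add_mul_sub_mul_mul_le {f₁ f₂ f₃ g : X → ℝ} {c d a₁ a₂ a₃ b : ℝ}
    (hK : IsCompact K) (hs : s ⊆ K) (hf₁ : ContinuousOn f₁ K) (hf₂ : ContinuousOn f₂ K)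
    (hf₃ : ContinuousOn f₃ K) (hg : ContinuousOn g K) (hc : 0 ≤ c) (hd : 0 ≤ d)
    (h₁ : √(∫ x in s, f₁ x ^ 2 ∂μ) ≤ a₁) (h₂ : √(∫ x in s, f₂ x ^ 2 ∂μ) ≤ a₂)
    (h₃ : √(∫ x in s, f₃ x ^ 2 ∂μ) ≤ a₃) (hb : √(∫ x in s, g x ^ 2 ∂μ) ≤ b) :
    ∫ x in s, (f₁ x + c * f₂ x - d * f₃ x) * g x ∂μ ≤ (a₁ + c * a₂ + d * a₃) * b := by
  have hint : ∀ {f : X → ℝ}, ContinuousOn f K → IntegrableOn (fun x => f x * g x) s μ :=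
    fun hf => ((hf.mul hg).integrableOn_compact hK).mono_set hs
  have hsplit : ∫ x in s, (f₁ x + c * f₂ x - d * f₃ x) * g x ∂μ
      = ∫ x in s, f₁ x * g x ∂μ + c * ∫ x in s, f₂ x * g x ∂μ
        - d * ∫ x in s, f₃ x * g x ∂μ := by
    simp_rw [sub_mul, add_mul, mul_assoc]
    rw [integral_sub, integral_add, integral_const_mul, integral_const_mul]
    exacts [hint hf₁, (hint hf₂).const_mul c, (hint hf₁).add ((hint hf₂).const_mul c),
      (hint hf₃).const_mul d]
  have b₁ := abs_setIntegral_mul_le_of_sqrt_le hK hs hf₁ hg h₁ hb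
  have b₂ := abs_setIntegral_mul_le_of_sqrt_le hK hs hf₂ hg h₂ hb
  have b₃ := abs_setIntegral_mul_le_of_sqrt_le hK hs hf₃ hg h₃ hb
  rw [hsplit]
  nlinarith [le_abs_self (∫ x in s, f₁ x * g x ∂μ), le_abs_self (∫ x in s, f₂ x * g x ∂μ),
    neg_abs_le (∫ x in s, f₃ x * g x ∂μ)]

end ContinuousOnCompact

theorem isCompact_euclidean_box {ι : Type*} [Fintype ι] (a b : ι → ℝ) :
    IsCompact {x : EuclideanSpace ℝ ι | ∀ i, x i ∈ Set.Icc (a i) (b i)} := by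
  have := (EuclideanSpace.equiv ι ℝ).toHomeomorph.isCompact_preimage.2
    (isCompact_univ_pi fun i => isCompact_Icc (a := a i) (b := b i))
  convert this using 1
  ext x
  simp [Pi.le_def, forall_and]

theorem ContDiffOn.gradient_of_isOpen {H : Type*} [NormedAddCommGroup H] [InnerProductSpace ℝ H]
    [CompleteSpace H] {f : H → ℝ} {V : Set H} {m n : WithTop ℕ∞} (hf : ContDiffOn ℝ n f V)
    (hV : IsOpen V) (hmn : m + 1 ≤ n) : ContDiffOn ℝ m (gradient f) V :=
  (InnerProductSpace.toDual ℝ H).symm.contDiff.comp_contDiffOn (hf.fderiv_of_isOpen hV hmn)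

local notation "ℝ²" => EuclideanSpace ℝ (Fin 2)

theorem ContDiffOn.continuousOn_vdiv {w : ℝ² → ℝ²} {V : Set ℝ²} (hw : ContDiffOn ℝ 1 w V)
    (hV : IsOpen V) : ContinuousOn (vdiv w) V :=
  continuousOn_finsetSum _ fun i _ => (PiLp.continuous_apply 2 _ i).comp_continuousOn
    ((hw.continuousOn_fderiv_of_isOpen hV le_rfl).clm_apply continuousOn_const)

theorem continuousOn_of_contDiffOn_two_near {D φ : ℝ² → ℝ} {Ω : Set ℝ²} (hD : ContDiff ℝ 1 D)
    (hφ : ∃ V, IsOpen V ∧ Ω ⊆ V ∧ ContDiffOn ℝ 2 φ V) :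
    ContinuousOn φ Ω ∧ ContinuousOn (gradient φ) Ω ∧
      ContinuousOn (vdiv fun y => D y • gradient φ y) Ω := by
  obtain ⟨V, hV, hΩV, hφ⟩ := hφ
  have hgrad : ContDiffOn ℝ 1 (gradient φ) V := hφ.gradient_of_isOpen hV (by norm_num)
  exact ⟨hφ.continuousOn.mono hΩV, hgrad.continuousOn.mono hΩV,
    ((hD.contDiffOn.smul hgrad).continuousOn_vdiv hV).mono hΩV⟩

section SUPG

open RealInnerProductSpace

variable {H : Type*} [NormedAddCommGroup H] [InnerProductSpace ℝ H] [MeasurableSpace H]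
  [BorelSpace H] {μ : Measure H} [IsFiniteMeasureOnCompacts μ] {Ω : Set H}

theorem sqrt_setIntegral_inner_sq_le {u v : H → H} {M : ℝ} (hΩ : IsCompact Ω)
    (hu : ContinuousOn u Ω) (hv : ContinuousOn v Ω) (hM : 0 ≤ M) (huM : ∀ x ∈ Ω, ‖u x‖ ≤ M) :
    √(∫ x in Ω, ⟪u x, v x⟫ ^ 2 ∂μ) ≤ M * √(∫ x in Ω, ‖v x‖ ^ 2 ∂μ) :=
  sqrt_setIntegral_sq_le_mul_of_abs_le hΩ (hu.inner hv) hv.norm hM fun x hx =>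
    (abs_real_inner_le_norm _ _).trans (mul_le_mul_of_nonneg_right (huM x hx) (norm_nonneg _))

theorem setIntegral_mul_inner_le {D : H → ℝ} {v w : H → H} {M : ℝ} (hΩ : IsCompact Ω)
    (hD : ContinuousOn D Ω) (hv : ContinuousOn v Ω) (hw : ContinuousOn w Ω) (hM : 0 ≤ M)
    (hDM : ∀ x ∈ Ω, ‖D x‖ ≤ M) :
    ∫ x in Ω, D x * ⟪v x, w x⟫ ∂μ
      ≤ M * √(∫ x in Ω, ‖v x‖ ^ 2 ∂μ) * √(∫ x in Ω, ‖w x‖ ^ 2 ∂μ) := by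
  have hMv : ContinuousOn (fun x => M * ‖v x‖) Ω := continuousOn_const.mul hv.norm
  have hpt : ∀ x ∈ Ω, D x * ⟪v x, w x⟫ ≤ M * ‖v x‖ * ‖w x‖ := fun x hx =>
    calc D x * ⟪v x, w x⟫ ≤ ‖D x * ⟪v x, w x⟫‖ := Real.le_norm_self _
      _ ≤ M * (‖v x‖ * ‖w x‖) := by
          rw [norm_mul]; exact mul_le_mul (hDM x hx) (norm_inner_le_norm _ _) (norm_nonneg _) hM
      _ = M * ‖v x‖ * ‖w x‖ := (mul_assoc _ _ _).symm
  calc ∫ x in Ω, D x * ⟪v x, w x⟫ ∂μ ≤ ∫ x in Ω, M * ‖v x‖ * ‖w x‖ ∂μ :=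
        setIntegral_mono_on ((hD.mul (hv.inner hw)).integrableOn_compact hΩ)
          ((hMv.mul hw.norm).integrableOn_compact hΩ) hΩ.measurableSet hpt
    _ ≤ _ := (le_abs_self _).trans <| abs_setIntegral_mul_le_of_sqrt_le hΩ subset_rfl hMv hw.norm
        (sqrt_setIntegral_sq_le_mul_of_abs_le hΩ hMv hv.norm hM fun x _ =>
          (abs_of_nonneg (by positivity)).le) le_rfl

variable {u v w : H → H} {D φ ψ R : H → ℝ} {Mu MD c ε π₁ : ℝ}

theorem galerkin_form_le (hΩ : IsCompact Ω) (hu : ContinuousOn u Ω) (hD : ContinuousOn D Ω)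
    (hφ : ContinuousOn φ Ω) (hψ : ContinuousOn ψ Ω) (hv : ContinuousOn v Ω)
    (hw : ContinuousOn w Ω) (hMu0 : 0 ≤ Mu) (hMu : ∀ x ∈ Ω, ‖u x‖ ≤ Mu) (hMD0 : 0 ≤ MD)
    (hMD : ∀ x ∈ Ω, ‖D x‖ ≤ MD) (hε : 0 ≤ ε) (hπ₁ : 0 ≤ π₁) (hc : 0 ≤ c)
    (hPφ : ∫ x in Ω, φ x ^ 2 ∂μ ≤ c * ∫ x in Ω, ‖v x‖ ^ 2 ∂μ)
    (hPψ : ∫ x in Ω, ψ x ^ 2 ∂μ ≤ c * ∫ x in Ω, ‖w x‖ ^ 2 ∂μ) :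
    ∫ x in Ω, ⟪u x, v x⟫ * ψ x ∂μ + π₁ * ∫ x in Ω, D x * ⟪v x, w x⟫ ∂μ
        + ε * ∫ x in Ω, φ x * ψ x ∂μ
      ≤ (Mu * √c + π₁ * MD + ε * c)
        * √(∫ x in Ω, ‖v x‖ ^ 2 ∂μ) * √(∫ x in Ω, ‖w x‖ ^ 2 ∂μ) := by
  have hpφ := (Real.sqrt_le_sqrt hPφ).trans_eq (Real.sqrt_mul hc _)
  have hpψ := (Real.sqrt_le_sqrt hPψ).trans_eq (Real.sqrt_mul hc _)
  have hconv := (le_abs_self _).trans <| abs_setIntegral_mul_le_of_sqrt_le hΩ subset_rfl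
    (hu.inner hv) hψ (sqrt_setIntegral_inner_sq_le hΩ hu hv hMu0 hMu) hpψ
  have hdiff := setIntegral_mul_inner_le (μ := μ) hΩ hD hv hw hMD0 hMD
  have hreac := (le_abs_self _).trans <|
    abs_setIntegral_mul_le_of_sqrt_le hΩ subset_rfl hφ hψ hpφ hpψ
  rw [mul_mul_mul_comm, Real.mul_self_sqrt hc] at hreac
  calc _ ≤ _ := add_le_add (add_le_add hconv (mul_le_mul_of_nonneg_left hdiff hπ₁))
        (mul_le_mul_of_nonneg_left hreac hε)
    _ = _ := by ring

theorem supg_stabilization_le {ι : Type*} [Fintype ι] {Ωe : ι → Set H} {δ K : ι → ℝ}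
    (hΩ : IsCompact Ω) (hsub : ∀ e, Ωe e ⊆ Ω) (hu : ContinuousOn u Ω)
    (hφ : ContinuousOn φ Ω) (hR : ContinuousOn R Ω) (hv : ContinuousOn v Ω)
    (hw : ContinuousOn w Ω) (hMu0 : 0 ≤ Mu) (hMu : ∀ x ∈ Ω, ‖u x‖ ≤ Mu) (hε : 0 ≤ ε)
    (hπ₁ : 0 ≤ π₁) (hc : 0 ≤ c) (hδ : ∀ e, 0 ≤ δ e) (hK : ∀ e, 0 ≤ K e)
    (hPφ : ∫ x in Ω, φ x ^ 2 ∂μ ≤ c * ∫ x in Ω, ‖v x‖ ^ 2 ∂μ)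
    (hinv : ∀ e, √(∫ x in Ωe e, R x ^ 2 ∂μ) ≤ K e * √(∫ x in Ωe e, ‖v x‖ ^ 2 ∂μ)) :
    ∑ e, δ e * ∫ x in Ωe e, (⟪u x, v x⟫ + ε * φ x - π₁ * R x) * ⟪u x, w x⟫ ∂μ
      ≤ (∑ e, δ e * ((Mu + ε * √c + π₁ * K e) * Mu))
        * √(∫ x in Ω, ‖v x‖ ^ 2 ∂μ) * √(∫ x in Ω, ‖w x‖ ^ 2 ∂μ) := by
  set Gv := √(∫ x in Ω, ‖v x‖ ^ 2 ∂μ)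
  set Gw := √(∫ x in Ω, ‖w x‖ ^ 2 ∂μ)
  have hpφ : √(∫ x in Ω, φ x ^ 2 ∂μ) ≤ √c * Gv :=
    (Real.sqrt_le_sqrt hPφ).trans_eq (Real.sqrt_mul hc _)
  have hav := sqrt_setIntegral_inner_sq_le (μ := μ) hΩ hu hv hMu0 hMu
  have haw := sqrt_setIntegral_inner_sq_le (μ := μ) hΩ hu hw hMu0 hMu
  have helem : ∀ e, ∫ x in Ωe e, (⟪u x, v x⟫ + ε * φ x - π₁ * R x) * ⟪u x, w x⟫ ∂μ
      ≤ (Mu * Gv + ε * (√c * Gv) + π₁ * (K e * Gv)) * (Mu * Gw) := fun e =>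
    setIntegral_add_mul_sub_mul_mul_le hΩ (hsub e) (hu.inner hv) hφ hR (hu.inner hw) hε hπ₁
      ((sqrt_setIntegral_sq_mono hΩ (hsub e) (hu.inner hv)).trans hav)
      ((sqrt_setIntegral_sq_mono hΩ (hsub e) hφ).trans hpφ)
      ((hinv e).trans (mul_le_mul_of_nonneg_left
        (sqrt_setIntegral_sq_mono hΩ (hsub e) hv.norm) (hK e)))
      ((sqrt_setIntegral_sq_mono hΩ (hsub e) (hu.inner hw)).trans haw)
  calc _ ≤ ∑ e, δ e * ((Mu * Gv + ε * (√c * Gv) + π₁ * (K e * Gv)) * (Mu * Gw)) :=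
        Finset.sum_le_sum fun e _ => mul_le_mul_of_nonneg_left (helem e) (hδ e)
    _ = _ := by
      simp only [Finset.sum_mul]
      exact Finset.sum_congr rfl fun e _ => by ring

end SUPG

theorem stmt4_general (a b : Fin 2 → ℝ)
    (Ω : Set (EuclideanSpace ℝ (Fin 2)))
    (hΩ : Ω = {x : EuclideanSpace ℝ (Fin 2) | ∀ i, x i ∈ Set.Icc (a i) (b i)})
    (U : Set (EuclideanSpace ℝ (Fin 2))) (hΩU : Ω ⊆ U)
    (u : EuclideanSpace ℝ (Fin 2) → EuclideanSpace ℝ (Fin 2))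
    (hu : ContDiffOn ℝ 1 u U)
    (ε π₁ : ℝ) (hε : 0 < ε) (hπ₁ : 0 < π₁)
    (D : EuclideanSpace ℝ (Fin 2) → ℝ) (hD : ContDiff ℝ 1 D)
    (hD1 : ∀ x ∈ Ω, 1 ≤ D x)
    (m : ℕ) (Ωe : Fin m → Set (EuclideanSpace ℝ (Fin 2)))
    (hcover : (⋃ e, Ωe e) = Ω)
    (h : Fin m → ℝ) (hh : ∀ e, 0 < h e)
    (Cinv : ℝ) (hCinv : 0 < Cinv)
    (δ : Fin m → ℝ) (hδ0 : ∀ e, 0 ≤ δ e)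
    (cΩ : ℝ) (hcΩ : 0 < cΩ) :
    ∃ C : ℝ, 0 ≤ C ∧
      ∀ (φ ψ : EuclideanSpace ℝ (Fin 2) → ℝ),
        (∃ V, IsOpen V ∧ Ω ⊆ V ∧ ContDiffOn ℝ 2 φ V) →
        (∃ W, IsOpen W ∧ Ω ⊆ W ∧ ContDiffOn ℝ 2 ψ W) →
        (∫ x in Ω, (φ x) ^ 2) ≤ cΩ * (∫ x in Ω, ‖gradient φ x‖ ^ 2) →
        (∫ x in Ω, (ψ x) ^ 2) ≤ cΩ * (∫ x in Ω, ‖gradient ψ x‖ ^ 2) →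
        (∀ e, Real.sqrt (∫ x in Ωe e, (vdiv (fun y => D y • gradient φ y) x) ^ 2)
          ≤ (Cinv * sSup (D '' Ωe e) / h e) *
            Real.sqrt (∫ x in Ωe e, ‖gradient φ x‖ ^ 2)) →
        (∀ e, Real.sqrt (∫ x in Ωe e, (vdiv (fun y => D y • gradient ψ y) x) ^ 2)
          ≤ (Cinv * sSup (D '' Ωe e) / h e) *
            Real.sqrt (∫ x in Ωe e, ‖gradient ψ x‖ ^ 2)) →
        (∫ x in Ω, (inner ℝ (u x) (gradient φ x) : ℝ) * ψ x)
          + π₁ * (∫ x in Ω, D x * (inner ℝ (gradient φ x) (gradient ψ x) : ℝ))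
          + ε * (∫ x in Ω, φ x * ψ x)
          + (∑ e, δ e * (∫ x in Ωe e,
              ((inner ℝ (u x) (gradient φ x) : ℝ) + ε * φ x
                - π₁ * vdiv (fun y => D y • gradient φ y) x)
              * (inner ℝ (u x) (gradient ψ x) : ℝ)))
        ≤ C * Real.sqrt (∫ x in Ω, ‖gradient φ x‖ ^ 2)
            * Real.sqrt (∫ x in Ω, ‖gradient ψ x‖ ^ 2) := by
  have hΩc : IsCompact Ω := hΩ ▸ isCompact_euclidean_box a b
  have hsub : ∀ e, Ωe e ⊆ Ω := fun e => hcover ▸ Set.subset_iUnion Ωe e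
  have huc : ContinuousOn u Ω := hu.continuousOn.mono hΩU
  have hDc : ContinuousOn D Ω := hD.continuous.continuousOn
  obtain ⟨Mu, hMu0, hMu⟩ := hΩc.exists_nonneg_bound_of_continuousOn huc
  obtain ⟨MD, hMD0, hMD⟩ := hΩc.exists_nonneg_bound_of_continuousOn hDc
  set K : Fin m → ℝ := fun e => Cinv * sSup (D '' Ωe e) / h e
  -- `D ≥ 1` on `Ωe e ⊆ Ω`, and an empty element has `sSup ∅ = 0`
  have hK : ∀ e, 0 ≤ K e := fun e => div_nonneg (mul_nonneg hCinv.le (Real.sSup_nonneg <| by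
    rintro _ ⟨x, hx, rfl⟩; linarith [hD1 x (hsub e hx)])) (hh e).le
  refine ⟨Mu * √cΩ + π₁ * MD + ε * cΩ + ∑ e, δ e * ((Mu + ε * √cΩ + π₁ * K e) * Mu), ?_, ?_⟩
  · have hsum : 0 ≤ ∑ e, δ e * ((Mu + ε * √cΩ + π₁ * K e) * Mu) :=
      Finset.sum_nonneg fun e _ => by have := hδ0 e; have := hK e; positivity
    positivity
  rintro φ ψ hφ hψ hPφ hPψ hIφ -
  obtain ⟨hφc, hgφc, hRφc⟩ := continuousOn_of_contDiffOn_two_near hD hφ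
  obtain ⟨hψc, hgψc, -⟩ := continuousOn_of_contDiffOn_two_near hD hψ
  have hgal := galerkin_form_le hΩc huc hDc hφc hψc hgφc hgψc hMu0 hMu hMD0 hMD hε.le hπ₁.le
    hcΩ.le hPφ hPψ
  have hstab := supg_stabilization_le hΩc hsub huc hφc hRφc hgφc hgψc hMu0 hMu hε.le hπ₁.le
    hcΩ.le hδ0 hK hPφ hIφ
  exact (add_le_add hgal hstab).trans_eq (by ring)

/-- SUPG continuity: under the geometric/data hypotheses of the SUPG
setting there exists `C ≥ 0` (depending only on the fixed data `c_Ω, ε, π₁, D, u, δ`)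
such that for all `C²` fields `φ, ψ` satisfying the Poincaré inequality and the
elementwise inverse estimate,
`a^ε_supg(φ,ψ) ≤ C ‖∇φ‖_{L²(Ω)} ‖∇ψ‖_{L²(Ω)}`. -/
theorem stmt4 (a b : Fin 2 → ℝ) (hab : ∀ i, a i < b i)
    (Ω : Set (EuclideanSpace ℝ (Fin 2)))
    (hΩ : Ω = {x : EuclideanSpace ℝ (Fin 2) | ∀ i, x i ∈ Set.Icc (a i) (b i)})
    (U : Set (EuclideanSpace ℝ (Fin 2))) (hU : IsOpen U) (hΩU : Ω ⊆ U)
    (u : EuclideanSpace ℝ (Fin 2) → EuclideanSpace ℝ (Fin 2))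
    (hu : ContDiffOn ℝ 1 u U)
    (hdiv : ∀ x ∈ Ω, vdiv u x = 0)
    (hubd : ∀ x ∈ frontier Ω, u x = 0)
    (ε π₁ : ℝ) (hε : 0 < ε) (hπ₁ : 0 < π₁)
    (D : EuclideanSpace ℝ (Fin 2) → ℝ) (hD : ContDiff ℝ 1 D)
    (hD1 : ∀ x ∈ Ω, 1 ≤ D x)
    (m : ℕ) (Ωe : Fin m → Set (EuclideanSpace ℝ (Fin 2)))
    (hmeas : ∀ e, MeasurableSet (Ωe e))
    (hdisj : Pairwise (Function.onFun Disjoint Ωe))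
    (hcover : (⋃ e, Ωe e) = Ω)
    (h : Fin m → ℝ) (hh : ∀ e, 0 < h e)
    (Cinv : ℝ) (hCinv : 0 < Cinv)
    (δ : Fin m → ℝ) (hδ0 : ∀ e, 0 ≤ δ e)
    (hδ1 : ∀ e, δ e ≤ 1 / (2 * ε))
    (hδ2 : ∀ e, δ e ≤ (h e) ^ 2 / (2 * π₁ * Cinv ^ 2 * (sSup (D '' Ωe e)) ^ 2))
    (cΩ : ℝ) (hcΩ : 0 < cΩ) :
    ∃ C : ℝ, 0 ≤ C ∧
      ∀ (φ ψ : EuclideanSpace ℝ (Fin 2) → ℝ),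
        (∃ V, IsOpen V ∧ Ω ⊆ V ∧ ContDiffOn ℝ 2 φ V) →
        (∃ W, IsOpen W ∧ Ω ⊆ W ∧ ContDiffOn ℝ 2 ψ W) →
        (∫ x in Ω, (φ x) ^ 2) ≤ cΩ * (∫ x in Ω, ‖gradient φ x‖ ^ 2) →
        (∫ x in Ω, (ψ x) ^ 2) ≤ cΩ * (∫ x in Ω, ‖gradient ψ x‖ ^ 2) →
        (∀ e, Real.sqrt (∫ x in Ωe e, (vdiv (fun y => D y • gradient φ y) x) ^ 2)
          ≤ (Cinv * sSup (D '' Ωe e) / h e) *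
            Real.sqrt (∫ x in Ωe e, ‖gradient φ x‖ ^ 2)) →
        (∀ e, Real.sqrt (∫ x in Ωe e, (vdiv (fun y => D y • gradient ψ y) x) ^ 2)
          ≤ (Cinv * sSup (D '' Ωe e) / h e) *
            Real.sqrt (∫ x in Ωe e, ‖gradient ψ x‖ ^ 2)) →
        (∫ x in Ω, (inner ℝ (u x) (gradient φ x) : ℝ) * ψ x)
          + π₁ * (∫ x in Ω, D x * (inner ℝ (gradient φ x) (gradient ψ x) : ℝ))
          + ε * (∫ x in Ω, φ x * ψ x)
          + (∑ e, δ e * (∫ x in Ωe e,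
              ((inner ℝ (u x) (gradient φ x) : ℝ) + ε * φ x
                - π₁ * vdiv (fun y => D y • gradient φ y) x)
              * (inner ℝ (u x) (gradient ψ x) : ℝ)))
        ≤ C * Real.sqrt (∫ x in Ω, ‖gradient φ x‖ ^ 2)
            * Real.sqrt (∫ x in Ω, ‖gradient ψ x‖ ^ 2) :=
  stmt4_general a b Ω hΩ U hΩU u hu ε π₁ hε hπ₁ D hD hD1 m Ωe hcover h hh Cinv hCinv δ hδ0 cΩ hcΩ
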